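/- Let G be a unicyclic graph with the cycle ordered as in the optimality condition (|V(U_1)| \ge |V(W_1)| \ge |V(U_2)| \ge ...). Among all trees obtained from G by deleting a single cycle edge, the tree T_1 obtained by deleting the edge joining the two cycle vertices farthest from u_1 (namely u_k w_{k-1} in the odd case, u_k w_k in the even case) has the minimum Wiener index: for any other cycle edge e_2, W(T_1) \le W(G - e_2). -/

import Mathlib

open SimpleGraph Finset

/-- The Wiener index of a graph: the sum of distances over all unordered pairs of vertices. -/
noncomputable def wienerIndex {V : Type*} [Fintype V] [DecidableEq V] (G : SimpleGraph V) : ℕ :=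
  ∑ p : Sym2 V, Sym2.lift ⟨fun u v => G.dist u v, fun u v => SimpleGraph.dist_comm⟩ p

/-- `G` is the unicyclic graph `C_γ(T_1,…,T_γ)`: every vertex `x` belongs to the tree attached
at the cycle position `c x`, `v i` is the cycle vertex (root) at position `i`, the subgraph
induced on each position class is a tree, and the only edges between distinct classes are the
cycle edges joining consecutive roots. -/
def CycleAttach {V : Type*} (G : SimpleGraph V) (γ : ℕ) (c : V → ℕ) (v : ℕ → V) : Prop :=
  (∀ x, c x < γ) ∧ (∀ i, i < γ → c (v i) = i) ∧
  (∀ i, i < γ → (G.induce {x | c x = i}).IsTree) ∧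
  (∀ x y, c x ≠ c y →
    (G.Adj x y ↔ x = v (c x) ∧ y = v (c y) ∧
      ((c x + 1) % γ = c y ∨ (c y + 1) % γ = c x)))

/-!
Deleting the cycle edge between positions `p` and `p + 1` leaves a tree in which two vertices
of one attached tree keep their tree distance, while vertices `x`, `y` of different attached
trees are at distance `d(x, root) + d(y, root) + |π_p(c x) - π_p(c y)|`, where `π_p` numbers
the positions along the remaining path. Hence twice the Wiener index is a constant plus the
weighted path cost `∑ n_i n_j |π_p(i) - π_p(j)|`, with `n_i` the order of the `i`-th attached
tree, and only this cost depends on the cut.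

Moving the cut one step forward, past position `a`, lowers the cost by `2 n_a Φ(a)`, where
`Φ(a) = ∑_{0<s<γ} n_{a+s} (2s - γ)`. Pairing the offsets `s` and `γ - s`, the ordering
`|U_1| ≥ |W_1| ≥ |U_2| ≥ ⋯` makes `Φ(a) ≥ 0` while `a` is nearer to `u_1` than its antipode and
`Φ(a) ≤ 0` afterwards, so the cost decreases until the cut reaches the edge farthest from `u_1`
and increases from there on.
-/

theorem SimpleGraph.dist_eq_of_le_succ_of_exists_lt {V : Type*} (H : SimpleGraph V)
    (D : V → V → ℕ) (hD_self : ∀ x, D x x = 0)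
    (hD_adj : ∀ ⦃a b⦄, H.Adj a b → ∀ y, D a y ≤ D b y + 1)
    (hD_desc : ∀ x y, x ≠ y → ∃ z, H.Adj x z ∧ D z y < D x y) (x y : V) :
    H.dist x y = D x y := by
  have le_length : ∀ {x : V} (w : H.Walk x y), D x y ≤ w.length := by
    intro x w
    induction w with
    | nil => simp [hD_self]
    | cons hab _ ih => grw [hD_adj hab, ih, Walk.length_cons]
  have exists_walk : ∀ m (x : V), D x y = m → ∃ w : H.Walk x y, w.length ≤ m := by
    intro m
    induction m using Nat.strong_induction_on with
    | _ m ih =>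
      intro x hx
      by_cases hxy : x = y
      · subst hxy
        exact ⟨.nil, Nat.zero_le _⟩
      obtain ⟨z, hxz, hz⟩ := hD_desc x y hxy
      obtain ⟨w, hw⟩ := ih _ (hx ▸ hz) z rfl
      exact ⟨.cons hxz w, by rw [Walk.length_cons]; omega⟩
  obtain ⟨w, hw⟩ := exists_walk _ x rfl
  obtain ⟨w', hw'⟩ := (Walk.reachable w).exists_walk_length_eq_dist
  have hlower := le_length w'
  have hupper := H.dist_le w
  omega

theorem two_nsmul_sum_sym2_lift {V M : Type*} [Fintype V] [DecidableEq V] [AddCommMonoid M]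
    (f : V → V → M) (hf_comm : ∀ a b, f a b = f b a) (hf_self : ∀ a, f a a = 0) :
    (2 : ℕ) • ∑ z : Sym2 V, Sym2.lift ⟨f, hf_comm⟩ z = ∑ x : V, ∑ y : V, f x y := by
  rw [← Finset.sum_product', Finset.smul_sum,
    ← Finset.sum_fiberwise _ fun q : V × V => s(q.1, q.2)]
  refine Finset.sum_congr rfl fun z _ => ?_
  induction z using Sym2.ind with
  | _ a b =>
    rcases eq_or_ne a b with rfl | hab
    · simp [hf_self, Finset.filter_eq']
    · have hfib : ({q ∈ univ ×ˢ univ | s(q.1, q.2) = s(a, b)} : Finset (V × V)) =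
          {(a, b), (b, a)} := by
        ext ⟨x, y⟩
        simp
      rw [hfib, Finset.sum_pair (by simp [hab]), Sym2.lift_mk, hf_comm b a, two_nsmul]

theorem two_mul_wienerIndex {V : Type*} [Fintype V] [DecidableEq V] (G : SimpleGraph V) :
    2 * wienerIndex G = ∑ x : V, ∑ y : V, G.dist x y :=
  two_nsmul_sum_sym2_lift _ _ fun _ => SimpleGraph.dist_self

theorem sum_sum_comp_eq_sum_sum_card_mul {V : Type*} [Fintype V] [DecidableEq V]
    (c : V → ℕ) (γ : ℕ) (hc : ∀ x, c x < γ) (g : ℕ → ℕ → ℕ) :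
    ∑ x : V, ∑ y : V, g (c x) (c y) =
      ∑ i ∈ range γ, ∑ j ∈ range γ, #{x | c x = i} * #{x | c x = j} * g i j := by
  have hfib : ∀ f : ℕ → ℕ, ∑ x : V, f (c x) = ∑ i ∈ range γ, #{x | c x = i} * f i := by
    intro f
    rw [← Finset.sum_fiberwise_of_maps_to (fun x _ => mem_range.mpr (hc x))]
    refine Finset.sum_congr rfl fun i _ => ?_
    rw [Finset.sum_congr rfl fun x hx => congrArg f (mem_filter.mp hx).2, sum_const, smul_eq_mul]
  rw [Finset.sum_congr rfl fun x _ => hfib (g (c x)),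
    hfib fun k => ∑ j ∈ range γ, #{x | c x = j} * g k j]
  simp_rw [Finset.mul_sum, mul_assoc]

theorem Nat.mod_eq_ite_of_lt_two_mul {x g : ℕ} (h : x < 2 * g) :
    x % g = if x < g then x else x - g := by
  split_ifs with hx
  · exact Nat.mod_eq_of_lt hx
  · rw [Nat.mod_eq_sub_mod (by omega), Nat.mod_eq_of_lt (by omega)]

/-- Cutting the cycle `0, 1, …, γ - 1` between `p` and `p + 1` leaves a path starting at
`p + 1`; `cutPos γ p i` is the position of `i` on it. -/
def cutPos (γ p i : ℕ) : ℕ := (i + γ - (p + 1)) % γ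

section CutPos

variable {γ p i j : ℕ}

theorem cutPos_lt (hγ : 0 < γ) : cutPos γ p i < γ := Nat.mod_lt _ hγ

theorem cutPos_self (hp : p < γ) : cutPos γ p p = γ - 1 := by
  rw [cutPos, Nat.mod_eq_ite_of_lt_two_mul (by omega)]
  split_ifs <;> omega

theorem cutPos_succ_mod_self (hp : p < γ) : cutPos γ p ((p + 1) % γ) = 0 := by
  rw [cutPos, Nat.mod_eq_ite_of_lt_two_mul (x := p + 1) (by omega)]
  split_ifs <;> rw [Nat.mod_eq_ite_of_lt_two_mul (by omega)] <;> split_ifs <;> omega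

theorem cutPos_succ_mod (hp : p < γ) (hi : i < γ) (hip : i ≠ p) :
    cutPos γ p ((i + 1) % γ) = cutPos γ p i + 1 := by
  rw [cutPos, cutPos, Nat.mod_eq_ite_of_lt_two_mul (x := i + 1) (by omega),
    Nat.mod_eq_ite_of_lt_two_mul (x := i + γ - (p + 1)) (by omega)]
  split_ifs <;> rw [Nat.mod_eq_ite_of_lt_two_mul (by omega)] <;> split_ifs <;> omega

theorem cutPos_eq_cutPos_succ_add_one (hp : p + 1 < γ) (hi : i < γ) (hip : i ≠ p + 1) :
    cutPos γ p i = cutPos γ (p + 1) i + 1 := by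
  rw [cutPos, cutPos, Nat.mod_eq_ite_of_lt_two_mul (by omega),
    Nat.mod_eq_ite_of_lt_two_mul (by omega)]
  split_ifs <;> omega

theorem cutPos_inj (hp : p < γ) (hi : i < γ) (hj : j < γ) :
    cutPos γ p i = cutPos γ p j ↔ i = j := by
  refine ⟨fun h => ?_, congrArg _⟩
  rw [cutPos, cutPos, Nat.mod_eq_ite_of_lt_two_mul (by omega),
    Nat.mod_eq_ite_of_lt_two_mul (by omega)] at h
  split_ifs at h <;> omega

theorem cutPos_add_mod (hp : p < γ) {s : ℕ} (hs : s < γ) : cutPos γ p ((p + 1 + s) % γ) = s := by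
  rw [cutPos, Nat.mod_eq_ite_of_lt_two_mul (x := p + 1 + s) (by omega)]
  split_ifs <;> rw [Nat.mod_eq_ite_of_lt_two_mul (by omega)] <;> split_ifs <;> omega

theorem add_cutPos_mod (hp : p < γ) (hi : i < γ) : (p + 1 + cutPos γ p i) % γ = i := by
  rw [cutPos, Nat.mod_eq_ite_of_lt_two_mul (x := i + γ - (p + 1)) (by omega)]
  split_ifs <;> rw [Nat.mod_eq_ite_of_lt_two_mul (by omega)] <;> split_ifs <;> omega

theorem sum_range_eq_sum_range_add_mod {M : Type*} [AddCommMonoid M] (hp : p < γ)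
    (F : ℕ → M) : ∑ j ∈ range γ, F j = ∑ s ∈ range γ, F ((p + 1 + s) % γ) := by
  refine Finset.sum_nbij' (cutPos γ p) (fun s => (p + 1 + s) % γ) ?_ ?_ ?_ ?_ ?_ <;>
    simp only [mem_range]
  · exact fun j _ => cutPos_lt (by omega)
  · exact fun s _ => Nat.mod_lt _ (by omega)
  · exact fun j hj => add_cutPos_mod hp hj
  · exact fun s hs => cutPos_add_mod hp hs
  · exact fun j hj => by rw [add_cutPos_mod hp hj]

end CutPos

section PathCost

variable (γ : ℕ) (n : ℕ → ℕ)

/-- Twice the Wiener index of the path obtained by cutting the cycle between `p` and `p + 1`,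
when each position `i` carries weight `n i`. -/
def pathCost (p : ℕ) : ℕ :=
  ∑ i ∈ range γ, ∑ j ∈ range γ, n i * n j * Nat.dist (cutPos γ p i) (cutPos γ p j)

/-- Twice the first moment of the weights about the antipode of `a`, positions being counted
forward from `a`. -/
def offsetMoment (a : ℕ) : ℤ :=
  ∑ s ∈ Ico 1 γ, (n ((a + s) % γ) : ℤ) * (2 * s - γ)

variable {γ}

/-- Moving the cut one step forward carries position `p + 1` from the start to the end of the
path and shifts every other position down by one. -/
theorem pathCost_sub_pathCost_succ {p : ℕ} (hp : p + 1 < γ) :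
    (pathCost γ n p : ℤ) - pathCost γ n (p + 1) = 2 * n (p + 1) * offsetMoment γ n (p + 1) := by
  set a := p + 1
  let δ : ℕ → ℤ := fun i => if i = a then 1 else 0
  let g : ℕ → ℤ := fun j => if j = a then 0 else 2 * cutPos γ p j - γ
  have hPa : cutPos γ p a = 0 := by
    simpa [a, Nat.mod_eq_of_lt hp] using cutPos_succ_mod_self (γ := γ) (p := p) (by omega)
  have hterm : ∀ i < γ, ∀ j < γ, (Nat.dist (cutPos γ p i) (cutPos γ p j) : ℤ) -
      Nat.dist (cutPos γ a i) (cutPos γ a j) = δ i * g j + δ j * g i := by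
    intro i hi j hj
    have hQa : cutPos γ a a = γ - 1 := cutPos_self hp
    have hPQ : ∀ k < γ, k ≠ a → cutPos γ p k = cutPos γ a k + 1 :=
      fun k hk hka => cutPos_eq_cutPos_succ_add_one hp hk hka
    have hQ : ∀ k, cutPos γ a k < γ := fun k => cutPos_lt (by omega)
    simp only [δ, g, Nat.dist]
    split_ifs with hia hja hja
    · simp [hia, hja]
    · rw [hia, hPa, hQa, hPQ j hj hja]
      have := hQ j
      push_cast
      omega
    · rw [hja, hPa, hQa, hPQ i hi hia]
      have := hQ i
      push_cast
      omega
    · rw [hPQ i hi hia, hPQ j hj hja]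
      push_cast
      omega
  have hmoment : ∑ j ∈ range γ, (n j : ℤ) * g j = offsetMoment γ n a := by
    rw [sum_range_eq_sum_range_add_mod (p := p) (by omega), range_eq_Ico,
      sum_eq_sum_Ico_succ_bot (by omega), offsetMoment]
    simp only [g, a, Nat.mod_eq_of_lt hp, add_zero, ↓reduceIte, mul_zero,
      zero_add, mul_ite]
    refine Finset.sum_congr rfl fun s hs => ?_
    rw [mem_Ico] at hs
    have hs_pos := cutPos_add_mod (γ := γ) (p := p) (by omega) hs.2
    have hne : (p + 1 + s) % γ ≠ a := fun h => by rw [h, hPa] at hs_pos; omega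
    rw [if_neg hne, hs_pos]
  calc (pathCost γ n p : ℤ) - pathCost γ n a
      = ∑ i ∈ range γ, ∑ j ∈ range γ, (n i : ℤ) * n j * (δ i * g j + δ j * g i) := by
        simp only [pathCost, Nat.cast_sum, Nat.cast_mul, ← sum_sub_distrib, ← mul_sub]
        refine sum_congr rfl fun i hi => sum_congr rfl fun j hj => ?_
        rw [hterm i (mem_range.mp hi) j (mem_range.mp hj)]
    _ = 2 * n a * ∑ j ∈ range γ, (n j : ℤ) * g j := by
        simp only [δ, ite_mul, one_mul, zero_mul, mul_add, mul_ite, mul_zero, sum_add_distrib,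
          sum_ite_irrel, sum_const_zero, sum_ite_eq', mem_range, hp, ↓reduceIte, mul_sum]
        rw [← sum_add_distrib]
        exact sum_congr rfl fun j _ => by ring
    _ = 2 * n a * offsetMoment γ n a := by rw [hmoment]

end PathCost

theorem sum_Ico_mul_two_mul_sub_nonneg (γ : ℕ) (f : ℕ → ℤ)
    (hf : ∀ s, 1 ≤ s → 2 * s < γ → f s ≤ f (γ - s)) :
    0 ≤ ∑ s ∈ Ico 1 γ, f s * (2 * s - γ) := by
  have hreflect : ∑ s ∈ Ico 1 γ, f s * (2 * s - γ) =
      ∑ s ∈ Ico 1 γ, f (γ - s) * (2 * ((γ - s : ℕ) : ℤ) - γ) := by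
    rw [sum_Ico_reflect (fun s : ℕ => f s * (2 * s - γ)) 1 (by omega : γ ≤ γ + 1)]
    congr 1
    ext s; simp
  have hpair : 2 * ∑ s ∈ Ico 1 γ, f s * (2 * s - γ) =
      ∑ s ∈ Ico 1 γ, (2 * s - γ) * (f s - f (γ - s)) := by
    rw [two_mul]
    nth_rw 2 [hreflect]
    rw [← sum_add_distrib]
    refine sum_congr rfl fun s hs => ?_
    rw [Nat.cast_sub (mem_Ico.mp hs).2.le]
    ring
  suffices 0 ≤ 2 * ∑ s ∈ Ico 1 γ, f s * (2 * s - γ) by omega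
  rw [hpair]
  refine sum_nonneg fun s hs => ?_
  rw [mem_Ico] at hs
  rcases lt_trichotomy (2 * s) γ with h | h | h
  · have := hf s hs.1 h
    exact mul_nonneg_of_nonpos_of_nonpos (by omega) (by omega)
  · have : (2 * s : ℤ) - γ = 0 := by omega
    simp [this]
  · have := hf (γ - s) (by omega) (by omega)
    rw [Nat.sub_sub_self hs.2.le] at this
    exact mul_nonneg (by omega) (by omega)

/-- The rank of a cycle position in the order `0, γ - 1, 1, γ - 2, 2, …`, that is
`u_1, w_1, u_2, w_2, …`. -/
def cycleRank (γ x : ℕ) : ℕ := min (2 * x) (2 * γ - 2 * x - 1)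

section Antitone

variable {γ : ℕ} {n : ℕ → ℕ}
  (hn : ∀ x y, x < γ → y < γ → cycleRank γ x ≤ cycleRank γ y → n y ≤ n x)
include hn

theorem offsetMoment_nonneg {a : ℕ} (ha : 1 ≤ a) (h2a : 2 * a < γ) : 0 ≤ offsetMoment γ n a := by
  refine sum_Ico_mul_two_mul_sub_nonneg γ _ fun s hs h2s => ?_
  refine Int.ofNat_le.mpr (hn _ _ (Nat.mod_lt _ (by omega)) (Nat.mod_lt _ (by omega)) ?_)
  rw [cycleRank, cycleRank, Nat.mod_eq_ite_of_lt_two_mul (by omega),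
    Nat.mod_eq_ite_of_lt_two_mul (by omega)]
  split_ifs <;> omega

theorem offsetMoment_nonpos {a : ℕ} (h2a : γ ≤ 2 * a) (ha : a < γ) : offsetMoment γ n a ≤ 0 := by
  have := sum_Ico_mul_two_mul_sub_nonneg γ (fun s => -(n ((a + s) % γ) : ℤ)) fun s hs h2s => by
    refine neg_le_neg (Int.ofNat_le.mpr (hn _ _ (Nat.mod_lt _ (by omega))
      (Nat.mod_lt _ (by omega)) ?_))
    rw [cycleRank, cycleRank, Nat.mod_eq_ite_of_lt_two_mul (by omega),
      Nat.mod_eq_ite_of_lt_two_mul (by omega)]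
    split_ifs <;> omega
  simpa [offsetMoment, sum_neg_distrib] using this

theorem pathCost_min {p : ℕ} (hp : p < γ) : pathCost γ n ((γ + 1) / 2 - 1) ≤ pathCost γ n p := by
  have hstep := fun q (hq : q + 1 < γ) => pathCost_sub_pathCost_succ n hq
  have hna := fun q => Int.natCast_nonneg (n q)
  rcases le_total p ((γ + 1) / 2 - 1) with hpk | hkp
  · induction hpk using Nat.decreasingInduction with
    | self => exact le_rfl
    | of_succ q hq ih =>
      have := offsetMoment_nonneg hn (a := q + 1) (by omega) (by omega)
      have := hstep q (by omega)
      have : (pathCost γ n (q + 1) : ℤ) ≤ pathCost γ n q := by nlinarith [hna (q + 1)]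
      omega
  · induction p, hkp using Nat.le_induction with
    | base => exact le_rfl
    | succ q hq ih =>
      have := offsetMoment_nonpos hn (a := q + 1) (by omega) hp
      have := hstep q hp
      specialize ih (by omega)
      have : (pathCost γ n q : ℤ) ≤ pathCost γ n (q + 1) := by nlinarith [hna (q + 1)]
      omega

end Antitone

theorem antitone_cycleRank_of_chain {γ : ℕ} {n : ℕ → ℕ}
    (hw : ∀ i, 1 ≤ i → 2 * i ≤ γ → n (γ - i) ≤ n (i - 1))
    (hu : ∀ i, 1 ≤ i → 2 * i + 1 ≤ γ → n i ≤ n (γ - i)) (x y : ℕ) (hx : x < γ) (hy : y < γ)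
    (hxy : cycleRank γ x ≤ cycleRank γ y) : n y ≤ n x := by
  let unrank : ℕ → ℕ := fun r => if r % 2 = 0 then r / 2 else γ - (r + 1) / 2
  have unrank_cycleRank : ∀ z < γ, unrank (cycleRank γ z) = z ∧ cycleRank γ z < γ := by
    intro z hz
    simp only [unrank, cycleRank]
    split_ifs <;> omega
  have step : ∀ r, r + 1 < γ → n (unrank (r + 1)) ≤ n (unrank r) := by
    intro r hr
    simp only [unrank]
    rcases Nat.even_or_odd' r with ⟨m, rfl | rfl⟩
    · simpa [Nat.add_mod, show (2 * m + 1 + 1) / 2 = m + 1 by omega]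
        using hw (m + 1) (by omega) (by omega)
    · simpa [Nat.add_mod, show (2 * m + 1 + 1) / 2 = m + 1 by omega]
        using hu (m + 1) (by omega) (by omega)
  obtain ⟨hx', -⟩ := unrank_cycleRank x hx
  obtain ⟨hy', hry⟩ := unrank_cycleRank y hy
  rw [← hx', ← hy']
  generalize cycleRank γ y = r at hxy hry
  induction r, hxy using Nat.le_induction with
  | base => exact le_rfl
  | succ r _ ih => exact (step r hry).trans (ih (by omega))

section AttachedTrees

variable {V : Type*} (G : SimpleGraph V) (c : V → ℕ) (v : ℕ → V)

/-- The distance inside the attached tree of `x`; junk value `0` when `y` lies in another one. -/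
noncomputable def treeDist (x y : V) : ℕ :=
  if h : c y = c x then (G.induce {z | c z = c x}).dist ⟨x, rfl⟩ ⟨y, h⟩ else 0

noncomputable def rootDist (x : V) : ℕ := treeDist G c x (v (c x))

variable {G c v}

theorem treeDist_eq {i : ℕ} {x y : V} (hx : c x = i) (hy : c y = i) :
    treeDist G c x y = (G.induce {z | c z = i}).dist ⟨x, hx⟩ ⟨y, hy⟩ := by
  subst hx
  exact dif_pos hy

@[simp]
theorem treeDist_self (x : V) : treeDist G c x x = 0 := by
  rw [treeDist_eq rfl rfl, dist_self]

theorem treeDist_comm {x y : V} (h : c y = c x) : treeDist G c x y = treeDist G c y x := by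
  rw [treeDist_eq rfl h, treeDist_eq h rfl, dist_comm]

theorem treeDist_le_of_adj {a b y : V} (hab : G.Adj a b) (hb : c b = c a) (hy : c y = c a) :
    treeDist G c a y ≤ treeDist G c b y + 1 := by
  have hadj : (G.induce {z | c z = c a}).Adj ⟨a, rfl⟩ ⟨b, hb⟩ := hab
  have := hadj.reachable.dist_triangle_left ⟨y, hy⟩
  rw [dist_eq_one_iff_adj.mpr hadj] at this
  rw [treeDist_eq rfl hy, treeDist_eq hb hy]
  omega

theorem exists_adj_treeDist_lt {x y : V} (hconn : (G.induce {z | c z = c x}).Preconnected)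
    (h : c y = c x) (hxy : x ≠ y) :
    ∃ z, G.Adj x z ∧ c z = c x ∧ treeDist G c z y < treeDist G c x y := by
  obtain ⟨w, hw⟩ := (hconn ⟨x, rfl⟩ ⟨y, h⟩).exists_walk_length_eq_dist
  cases w with
  | nil => exact absurd rfl hxy
  | @cons _ z _ hxz w =>
    refine ⟨z, hxz, z.2, ?_⟩
    rw [treeDist_eq rfl h, ← hw, treeDist_eq z.2 h, Walk.length_cons]
    exact Nat.lt_succ_of_le (dist_le w)

theorem rootDist_root {i : ℕ} (hv : c (v i) = i) : rootDist G c v (v i) = 0 := by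
  rw [rootDist, hv, treeDist_self]

theorem treeDist_root {i : ℕ} {y : V} (hv : c (v i) = i) (hy : c y = i) :
    treeDist G c (v i) y = rootDist G c v y := by
  rw [rootDist, treeDist_comm (hy.trans hv.symm), hy]

end AttachedTrees

section CutGraph

variable {V : Type*} {G : SimpleGraph V} {γ : ℕ} {c : V → ℕ} {v : ℕ → V} {p : ℕ}

theorem CycleAttach.pos_lt (hatt : CycleAttach G γ c v) (x : V) : c x < γ := hatt.1 x

theorem CycleAttach.pos_root (hatt : CycleAttach G γ c v) {i : ℕ} (hi : i < γ) : c (v i) = i :=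
  hatt.2.1 i hi

theorem CycleAttach.preconnected (hatt : CycleAttach G γ c v) (x : V) :
    (G.induce {z | c z = c x}).Preconnected :=
  (hatt.2.2.1 (c x) (hatt.pos_lt x)).connected.preconnected

theorem CycleAttach.adj_iff (hatt : CycleAttach G γ c v) {x y : V} (hxy : c x ≠ c y) :
    G.Adj x y ↔ x = v (c x) ∧ y = v (c y) ∧ ((c x + 1) % γ = c y ∨ (c y + 1) % γ = c x) :=
  hatt.2.2.2 x y hxy

variable (G γ c v) in
/-- The distance in the spanning tree `G - v p v (p + 1)`. -/
noncomputable def cutDist (p : ℕ) (x y : V) : ℕ :=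
  (if c x = c y then treeDist G c x y else rootDist G c v x + rootDist G c v y) +
    Nat.dist (cutPos γ p (c x)) (cutPos γ p (c y))

theorem cutDist_root (hatt : CycleAttach G γ c v) {i : ℕ} (hi : i < γ) (y : V) :
    cutDist G γ c v p (v i) y = rootDist G c v y + Nat.dist (cutPos γ p i) (cutPos γ p (c y)) := by
  have hv := hatt.pos_root hi
  rw [cutDist, hv]
  split_ifs with h
  · rw [treeDist_root hv h.symm]
  · rw [rootDist_root hv, zero_add]

theorem adj_deleteEdges_of_adj_of_pos_eq (hatt : CycleAttach G γ c v) (hγ : 2 ≤ γ) (hp : p < γ)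
    {a b : V} (hab : G.Adj a b) (hc : c a = c b) :
    (G.deleteEdges {s(v p, v ((p + 1) % γ))}).Adj a b := by
  refine (deleteEdges_adj ..).mpr ⟨hab, fun h => ?_⟩
  have hq := Nat.mod_lt (p + 1) (by omega : 0 < γ)
  have hdiff : cutPos γ p p ≠ cutPos γ p ((p + 1) % γ) := by
    rw [cutPos_self hp, cutPos_succ_mod_self hp]; omega
  rcases Sym2.eq_iff.mp h with ⟨rfl, rfl⟩ | ⟨rfl, rfl⟩ <;>
    rw [hatt.pos_root hp, hatt.pos_root hq] at hc
  · exact hdiff (congrArg (cutPos γ p) hc)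
  · exact hdiff (congrArg (cutPos γ p) hc).symm

theorem eq_roots_of_adj_deleteEdges (hatt : CycleAttach G γ c v) (hp : p < γ) {a b : V}
    (hab : (G.deleteEdges {s(v p, v ((p + 1) % γ))}).Adj a b) (hc : c a ≠ c b) :
    a = v (c a) ∧ b = v (c b) ∧ Nat.dist (cutPos γ p (c a)) (cutPos γ p (c b)) = 1 := by
  obtain ⟨hG, hcut⟩ := (deleteEdges_adj ..).mp hab
  obtain ⟨ha, hb, hnext | hnext⟩ := (hatt.adj_iff hc).mp hG
  all_goals refine ⟨ha, hb, ?_⟩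
  · have hap : c a ≠ p := by
      rintro hap
      exact hcut (by rw [ha, hb, ← hnext, hap]; rfl)
    rw [← hnext, cutPos_succ_mod hp (hatt.pos_lt a) hap, Nat.dist]
    omega
  · have hbp : c b ≠ p := by
      rintro hbp
      exact hcut (by rw [ha, hb, ← hnext, hbp, Sym2.eq_swap]; rfl)
    rw [← hnext, cutPos_succ_mod hp (hatt.pos_lt b) hbp, Nat.dist]
    omega

theorem adj_deleteEdges_of_cutPos_eq_add_one (hatt : CycleAttach G γ c v) (hγ : 3 ≤ γ)
    (hp : p < γ) {i j : ℕ} (hi : i < γ) (hj : j < γ) (hij : cutPos γ p j = cutPos γ p i + 1) :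
    (G.deleteEdges {s(v p, v ((p + 1) % γ))}).Adj (v i) (v j) := by
  have hj_lt : cutPos γ p j < γ := cutPos_lt (by omega)
  have hip : i ≠ p := by
    rintro rfl
    rw [cutPos_self hp] at hij
    omega
  have hji : (i + 1) % γ = j := by
    rw [← cutPos_inj hp (Nat.mod_lt _ (by omega)) hj, cutPos_succ_mod hp hi hip, hij]
  have hne : c (v i) ≠ c (v j) := by
    rw [hatt.pos_root hi, hatt.pos_root hj]
    rintro rfl
    omega
  refine (deleteEdges_adj ..).mpr ⟨(hatt.adj_iff hne).mpr ?_, fun h => ?_⟩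
  · rw [hatt.pos_root hi, hatt.pos_root hj]
    exact ⟨rfl, rfl, Or.inl hji⟩
  · have hq := Nat.mod_lt (p + 1) (by omega : 0 < γ)
    rcases Sym2.eq_iff.mp h with ⟨hvi, -⟩ | ⟨hvi, hvj⟩
    · exact hip (by simpa [hatt.pos_root hi, hatt.pos_root hp] using congrArg c hvi)
    · have hi' : i = (p + 1) % γ := by
        simpa [hatt.pos_root hi, hatt.pos_root hq] using congrArg c hvi
      have hj' : j = p := by simpa [hatt.pos_root hj, hatt.pos_root hp] using congrArg c hvj
      rw [hi', hj', cutPos_self hp, cutPos_succ_mod_self hp] at hij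
      omega

theorem cutDist_self (x : V) : cutDist G γ c v p x x = 0 := by
  simp [cutDist]

theorem cutDist_le_of_adj (hatt : CycleAttach G γ c v) (hp : p < γ) {a b : V}
    (hab : (G.deleteEdges {s(v p, v ((p + 1) % γ))}).Adj a b) (y : V) :
    cutDist G γ c v p a y ≤ cutDist G γ c v p b y + 1 := by
  by_cases hc : c a = c b
  · have hG := ((deleteEdges_adj ..).mp hab).1
    unfold cutDist
    rw [← hc]
    by_cases hy : c a = c y
    · rw [if_pos hy, if_pos (hc ▸ hy)]
      have := treeDist_le_of_adj hG hc.symm hy.symm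
      omega
    · rw [if_neg hy, if_neg (hc ▸ hy)]
      have := treeDist_le_of_adj hG hc.symm (hatt.pos_root (hatt.pos_lt a))
      simp only [rootDist, ← hc]
      omega
  · obtain ⟨ha, hb, hd⟩ := eq_roots_of_adj_deleteEdges hatt hp hab hc
    rw [ha, hb, cutDist_root hatt (hatt.pos_lt a), cutDist_root hatt (hatt.pos_lt b)]
    have := Nat.dist.triangle_inequality (cutPos γ p (c a)) (cutPos γ p (c b)) (cutPos γ p (c y))
    omega

theorem exists_adj_root_cutDist_lt (hatt : CycleAttach G γ c v) (hγ : 3 ≤ γ) (hp : p < γ)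
    {i : ℕ} (hi : i < γ) {y : V} (hy : c y ≠ i) :
    ∃ j < γ, (G.deleteEdges {s(v p, v ((p + 1) % γ))}).Adj (v i) (v j) ∧
      cutDist G γ c v p (v j) y < cutDist G γ c v p (v i) y := by
  have hne : cutPos γ p i ≠ cutPos γ p (c y) :=
    fun h => hy ((cutPos_inj hp hi (hatt.pos_lt y)).mp h).symm
  have hlt : cutPos γ p (c y) < γ := cutPos_lt (by omega)
  have hlt' : cutPos γ p i < γ := cutPos_lt (by omega)
  rcases Nat.lt_or_gt_of_ne hne with h | h
  · have hj := cutPos_add_mod (γ := γ) hp (s := cutPos γ p i + 1) (by omega)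
    refine ⟨(p + 1 + (cutPos γ p i + 1)) % γ, Nat.mod_lt _ (by omega),
      adj_deleteEdges_of_cutPos_eq_add_one hatt hγ hp hi (Nat.mod_lt _ (by omega)) hj, ?_⟩
    rw [cutDist_root hatt hi, cutDist_root hatt (Nat.mod_lt _ (by omega)), hj, Nat.dist, Nat.dist]
    omega
  · have hj := cutPos_add_mod (γ := γ) hp (s := cutPos γ p i - 1) (by omega)
    refine ⟨(p + 1 + (cutPos γ p i - 1)) % γ, Nat.mod_lt _ (by omega),
      (adj_deleteEdges_of_cutPos_eq_add_one hatt hγ hp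
      (Nat.mod_lt _ (by omega)) hi (by omega)).symm, ?_⟩
    rw [cutDist_root hatt hi, cutDist_root hatt (Nat.mod_lt _ (by omega)), hj, Nat.dist, Nat.dist]
    omega

theorem exists_adj_cutDist_lt (hatt : CycleAttach G γ c v) (hγ : 3 ≤ γ) (hp : p < γ)
    {x y : V} (hxy : x ≠ y) :
    ∃ z, (G.deleteEdges {s(v p, v ((p + 1) % γ))}).Adj x z ∧
      cutDist G γ c v p z y < cutDist G γ c v p x y := by
  have hconn := hatt.preconnected x
  by_cases hc : c x = c y
  · obtain ⟨z, hxz, hzx, hlt⟩ := exists_adj_treeDist_lt hconn hc.symm hxy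
    refine ⟨z, adj_deleteEdges_of_adj_of_pos_eq hatt (by omega) hp hxz hzx.symm, ?_⟩
    simp only [cutDist, if_pos hc, hzx]
    omega
  by_cases hroot : x = v (c x)
  · obtain ⟨j, -, hadj, hlt⟩ := exists_adj_root_cutDist_lt hatt hγ hp (hatt.pos_lt x) (Ne.symm hc)
    rw [← hroot] at hadj hlt
    exact ⟨_, hadj, hlt⟩
  · obtain ⟨z, hxz, hzx, hlt⟩ :=
      exists_adj_treeDist_lt hconn (hatt.pos_root (hatt.pos_lt x)) hroot
    refine ⟨z, adj_deleteEdges_of_adj_of_pos_eq hatt (by omega) hp hxz hzx.symm, ?_⟩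
    simp only [cutDist, if_neg hc, rootDist, hzx]
    omega

theorem dist_deleteEdges_eq_cutDist (hatt : CycleAttach G γ c v) (hγ : 3 ≤ γ) (hp : p < γ)
    (x y : V) : (G.deleteEdges {s(v p, v ((p + 1) % γ))}).dist x y = cutDist G γ c v p x y :=
  dist_eq_of_le_succ_of_exists_lt _ _ cutDist_self (fun _ _ hab => cutDist_le_of_adj hatt hp hab)
    (fun _ _ hxy => exists_adj_cutDist_lt hatt hγ hp hxy) x y

end CutGraph

theorem exists_two_mul_wienerIndex_deleteEdges_eq {V : Type*} [Fintype V] [DecidableEq V]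
    {G : SimpleGraph V} {γ : ℕ} {c : V → ℕ} {v : ℕ → V} (hatt : CycleAttach G γ c v)
    (hγ : 3 ≤ γ) : ∃ B, ∀ p < γ, 2 * wienerIndex (G.deleteEdges {s(v p, v ((p + 1) % γ))}) =
      B + pathCost γ (fun i => #{x | c x = i}) p := by
  refine ⟨∑ x, ∑ y, if c x = c y then treeDist G c x y else rootDist G c v x + rootDist G c v y,
    fun p hp => ?_⟩
  rw [two_mul_wienerIndex, pathCost, ← sum_sum_comp_eq_sum_sum_card_mul c γ hatt.pos_lt
    (fun i j => Nat.dist (cutPos γ p i) (cutPos γ p j)), ← sum_add_distrib]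
  refine sum_congr rfl fun x _ => ?_
  rw [← sum_add_distrib]
  exact sum_congr rfl fun y _ => dist_deleteEdges_eq_cutDist hatt hγ hp x y

/-- Let `G` be a unicyclic graph whose cycle `u_1,…,u_k,(w_k),w_{k-1},…,w_1` (here `u_i` is the
root at position `i-1` and `w_j` the root at position `γ-j`, with `k = ⌈γ/2⌉`) is ordered as in
the optimality condition `|V(U_1)| ≥ |V(W_1)| ≥ |V(U_2)| ≥ ⋯`.  Among the spanning trees of `G`
obtained by deleting one cycle edge, deleting the edge joining the two cycle vertices farthest
from `u_1` — the edge between positions `k-1` and `k`, i.e. `u_k w_{k-1}` in the odd case and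
`u_k w_k` in the even case — minimizes the Wiener index. -/
theorem delete_farthest_edge_min_wiener {V : Type*} [Fintype V] [DecidableEq V]
    (G : SimpleGraph V) (γ : ℕ) (hγ : 3 ≤ γ) (c : V → ℕ) (v : ℕ → V)
    (hattach : CycleAttach G γ c v)
    (hchain1 : ∀ (i : ℕ) (_h1 : 1 ≤ i) (_h2 : 2 * i ≤ γ),
      (Finset.univ.filter fun x => c x = γ - i).card ≤
        (Finset.univ.filter fun x => c x = i - 1).card)
    (hchain2 : ∀ (i : ℕ) (_h1 : 1 ≤ i) (_h2 : 2 * i + 1 ≤ γ),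
      (Finset.univ.filter fun x => c x = i).card ≤
        (Finset.univ.filter fun x => c x = γ - i).card) :
    ∀ p : ℕ, p < γ →
      wienerIndex (G.deleteEdges {s(v ((γ + 1) / 2 - 1), v ((γ + 1) / 2))}) ≤
        wienerIndex (G.deleteEdges {s(v p, v ((p + 1) % γ))}) := by
  intro p hp
  obtain ⟨B, hB⟩ := exists_two_mul_wienerIndex_deleteEdges_eq hattach hγ
  have hfar := hB ((γ + 1) / 2 - 1) (by omega)
  rw [Nat.sub_add_cancel (by omega), Nat.mod_eq_of_lt (by omega)] at hfar
  have hmin := pathCost_min (antitone_cycleRank_of_chain hchain1 hchain2) hp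
  have := hB p hp
  omega
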